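/- arXiv:2411.03947 — 2 statements merged into one kernel-verified Lean document; each statement's English description precedes it below -/
import Mathlib

section
/- Let S be a semigroup. Then the semigroup S⁰ obtained from S by adjoining a zero element is finitely right equated if and only if S is finitely right equated and S = US¹ for some finite set U ⊆ S. -/
/-- The right annihilator congruence `r_S(a) = {(s,t) : a*s = a*t}`. -/
def rAnn {S : Type*} [Semigroup S] (a : S) : S → S → Prop :=
  fun s t => a * s = a * t

/-- A right congruence on a semigroup: an equivalence relation compatible with
right multiplication. -/
def IsRightCong {S : Type*} [Semigroup S] (ρ : S → S → Prop) : Prop :=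
  Equivalence ρ ∧ ∀ a b s : S, ρ a b → ρ (a * s) (b * s)

/-- The smallest right congruence containing the relation `X`. -/
def rcGen {S : Type*} [Semigroup S] (X : S → S → Prop) : S → S → Prop :=
  fun a b => ∀ ρ : S → S → Prop, IsRightCong ρ → (∀ x y, X x y → ρ x y) → ρ a b

/-- A right congruence is finitely generated if it is generated by a finite
set of pairs. -/
def FGRightCong {S : Type*} [Semigroup S] (ρ : S → S → Prop) : Prop :=
  ∃ X : Finset (S × S), ρ = rcGen (fun a b => (a, b) ∈ X)

/-- A semigroup is finitely right equated if every right annihilator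
congruence is finitely generated. -/
def FRE (S : Type*) [Semigroup S] : Prop :=
  ∀ a : S, FGRightCong (rAnn a)

/-- `XS¹ = X ∪ XS` for a subset `X` of a semigroup `S`. -/
def RS1 {S : Type*} [Semigroup S] (X : Set S) : Set S :=
  X ∪ {y | ∃ x ∈ X, ∃ s : S, y = x * s}

/-!
For `a ∈ S` we have `a * 0 = 0` while `a * s ≠ 0`, so `r_{S⁰}(a)` is `r_S(a)` together with the
single pair `(0, 0)`, and generating sets pass back and forth between a right congruence on `S`
and this extension. The remaining annihilator `r_{S⁰}(0)` is the universal relation. It is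
generated by the pairs `(0, u)`, `u ∈ U`, whenever `S = US¹`. Conversely, if finitely many pairs
generate it, let `U` be the nonzero entries of these pairs: the right Rees congruence collapsing
the right ideal `{0} ∪ US¹` contains every generator, so it is universal and `S = US¹`.
-/

section RightCongruence

variable {S : Type*} [Semigroup S]

lemma eq_rcGen_iff {ρ X : S → S → Prop} (hρ : IsRightCong ρ) :
    ρ = rcGen X ↔ (∀ x y, X x y → ρ x y) ∧
      ∀ σ, IsRightCong σ → (∀ x y, X x y → σ x y) → ∀ a b, ρ a b → σ a b := by
  refine ⟨?_, fun ⟨hX, hmin⟩ => ?_⟩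
  · rintro rfl
    exact ⟨fun x y h σ _ hσ => hσ x y h, fun σ hσ hX a b h => h σ hσ hX⟩
  · ext a b
    exact ⟨fun h σ hσ hXσ => hmin σ hσ hXσ a b h, fun h => h ρ hρ hX⟩

lemma rAnn_isRightCong (a : S) : IsRightCong (rAnn a) :=
  ⟨⟨fun _ => rfl, Eq.symm, Eq.trans⟩, fun x y s (h : a * x = a * y) => by
    simp only [rAnn, ← mul_assoc, h]⟩

def reesRel (D : Set S) : S → S → Prop :=
  fun x y => x = y ∨ (x ∈ D ∧ y ∈ D)

lemma reesRel_isRightCong {D : Set S} (hD : ∀ x ∈ D, ∀ s, x * s ∈ D) :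
    IsRightCong (reesRel D) := by
  refine ⟨⟨fun _ => Or.inl rfl, ?_, ?_⟩, ?_⟩
  · rintro x y (rfl | ⟨hx, hy⟩)
    exacts [Or.inl rfl, Or.inr ⟨hy, hx⟩]
  · rintro x y z (rfl | ⟨hx, hy⟩) (rfl | ⟨_, hz⟩)
    exacts [Or.inl rfl, Or.inr ⟨‹_›, hz⟩, Or.inr ⟨hx, hy⟩, Or.inr ⟨hx, hz⟩]
  · rintro x y s (rfl | ⟨hx, hy⟩)
    exacts [Or.inl rfl, Or.inr ⟨hD x hx s, hD y hy s⟩]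

lemma isRightCong_top : IsRightCong fun _ _ : S => True :=
  ⟨⟨fun _ => trivial, fun _ => trivial, fun _ _ => trivial⟩, fun _ _ _ _ => trivial⟩

lemma mul_mem_RS1 {X : Set S} {x : S} (hx : x ∈ RS1 X) (s : S) : x * s ∈ RS1 X := by
  rcases hx with hx | ⟨u, hu, t, rfl⟩
  exacts [Or.inr ⟨x, hx, s, rfl⟩, Or.inr ⟨u, hu, t * s, mul_assoc u t s⟩]

end RightCongruence

namespace WithZero

variable {S : Type*}

/-- The relation `ρ ∪ {(0, 0)}` on `S⁰`. -/
def extZero (ρ : S → S → Prop) : WithZero S → WithZero S → Prop :=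
  recZeroCoe (recZeroCoe True fun _ => False) fun s => recZeroCoe False (ρ s)

variable {ρ : S → S → Prop}

@[simp] lemma extZero_zero_zero : extZero ρ 0 0 := trivial
@[simp] lemma extZero_coe_coe {s t : S} : extZero ρ s t ↔ ρ s t := Iff.rfl
@[simp] lemma not_extZero_zero_coe {t : S} : ¬ extZero ρ 0 t := id
@[simp] lemma not_extZero_coe_zero {s : S} : ¬ extZero ρ s 0 := id

variable [Semigroup S]

lemma _root_.IsRightCong.extZero (hρ : IsRightCong ρ) : IsRightCong (extZero ρ) := by
  obtain ⟨⟨hrefl, hsymm, htrans⟩, hmul⟩ := hρ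
  refine ⟨⟨?_, fun {x y} => ?_, fun {x y z} => ?_⟩, ?_⟩
  · simp [WithZero.forall, hrefl]
  · induction x using recZeroCoe <;> induction y using recZeroCoe <;> simp
    exact hsymm
  · induction x using recZeroCoe <;> induction y using recZeroCoe <;>
      induction z using recZeroCoe <;> simp
    exact htrans
  · simpa [WithZero.forall, ← coe_mul] using hmul

lemma _root_.IsRightCong.comap_coe {σ : WithZero S → WithZero S → Prop}
    (hσ : IsRightCong σ) :
    IsRightCong fun s t : S => σ s t := by
  obtain ⟨⟨hrefl, hsymm, htrans⟩, hmul⟩ := hσ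
  exact ⟨⟨fun _ => hrefl _, hsymm, htrans⟩, fun s t u h => by simpa using hmul _ _ u h⟩

lemma rAnn_coe (a : S) : rAnn (a : WithZero S) = extZero (rAnn a) := by
  ext x y
  induction x using recZeroCoe <;> induction y using recZeroCoe <;>
    simp [rAnn, ← coe_mul]

lemma rAnn_zero : rAnn (0 : WithZero S) = fun _ _ => True := by
  ext x y
  simp [rAnn]

lemma fgRightCong_extZero_iff {ρ : S → S → Prop} (hρ : IsRightCong ρ) :
    FGRightCong (extZero ρ) ↔ FGRightCong ρ := by
  classical
  constructor
  · rintro ⟨Y, hY⟩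
    obtain ⟨hYρ, hYmin⟩ := (eq_rcGen_iff hρ.extZero).1 hY
    refine ⟨Y.preimage (Prod.map coe coe)
      (coe_injective.prodMap coe_injective).injOn,
      (eq_rcGen_iff hρ).2 ⟨fun s t h => hYρ s t (Finset.mem_preimage.1 h :),
        fun σ hσ hXσ s t h => hYmin (extZero σ) hσ.extZero (fun x y hxy => ?_) s t h⟩⟩
    have hρxy := hYρ x y hxy
    induction x using recZeroCoe <;> induction y using recZeroCoe <;> simp at hρxy ⊢
    exact hXσ _ _ (Finset.mem_preimage.2 hxy)
  · rintro ⟨X, hX⟩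
    obtain ⟨hXρ, hXmin⟩ := (eq_rcGen_iff hρ).1 hX
    refine ⟨X.image (Prod.map coe coe),
      (eq_rcGen_iff hρ.extZero).2 ⟨?_, fun σ hσ hσX x y hxy => ?_⟩⟩
    · simp only [Finset.mem_image, Prod.exists, Prod.map, Prod.mk.injEq]
      rintro x y ⟨s, t, hst, rfl, rfl⟩
      exact hXρ s t hst
    · induction x using recZeroCoe <;> induction y using recZeroCoe <;> simp at hxy
      · exact hσ.1.refl 0
      · exact hXmin (fun s t => σ s t) hσ.comap_coe
          (fun s t h => hσX _ _ (Finset.mem_image_of_mem (Prod.map coe coe) h)) _ _ hxy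

lemma fgRightCong_rAnn_coe_iff (a : S) :
    FGRightCong (rAnn (a : WithZero S)) ↔ FGRightCong (rAnn a) := by
  rw [rAnn_coe]
  exact fgRightCong_extZero_iff (rAnn_isRightCong a)

lemma exists_RS1_eq_univ_of_fgRightCong_top (h : FGRightCong fun _ _ : WithZero S => True) :
    ∃ U : Finset S, RS1 (↑U : Set S) = Set.univ := by
  classical
  obtain ⟨Y, hY⟩ := h
  let U : Finset S := (Y.image Prod.fst ∪ Y.image Prod.snd).preimage coe coe_injective.injOn
  refine ⟨U, Set.eq_univ_of_forall fun s => ?_⟩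
  let D : Set (WithZero S) := {x | ∀ s : S, x = ↑s → s ∈ RS1 (↑U : Set S)}
  have hD : ∀ x ∈ D, ∀ w, x * w ∈ D := by
    intro x hx w s hs
    induction x using recZeroCoe with
    | zero => simp at hs
    | coe x =>
      induction w using recZeroCoe with
      | zero => simp at hs
      | coe w =>
        rw [← coe_mul, coe_inj] at hs
        exact hs ▸ mul_mem_RS1 (hx x rfl) w
  have hYD : ∀ x y, (x, y) ∈ Y → reesRel D x y := by
    refine fun x y hxy => Or.inr ⟨fun s hs => Or.inl ?_, fun s hs => Or.inl ?_⟩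
    · exact Finset.mem_preimage.2 (Finset.mem_union_left _ (Finset.mem_image.2 ⟨_, hxy, hs⟩))
    · exact Finset.mem_preimage.2 (Finset.mem_union_right _ (Finset.mem_image.2 ⟨_, hxy, hs⟩))
  have h0s : rcGen (fun x y => (x, y) ∈ Y) 0 (s : WithZero S) := by
    rw [← hY]
    trivial
  rcases h0s _ (reesRel_isRightCong hD) hYD with h | ⟨-, hs⟩
  · exact absurd h.symm coe_ne_zero
  · exact hs s rfl

lemma fgRightCong_top_of_RS1_eq_univ {U : Finset S} (hU : RS1 (↑U : Set S) = Set.univ) :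
    FGRightCong fun _ _ : WithZero S => True := by
  classical
  refine ⟨U.image fun u : S => ((0 : WithZero S), (u : WithZero S)),
    (eq_rcGen_iff isRightCong_top).2 ⟨fun _ _ _ => trivial, fun σ hσ hσU x y _ => ?_⟩⟩
  have hzero : ∀ z, σ 0 z := by
    refine WithZero.forall.2 ⟨hσ.1.refl 0, fun t => ?_⟩
    have ht : t ∈ RS1 (↑U : Set S) := hU ▸ Set.mem_univ t
    rcases ht with ht | ⟨u, hu, v, rfl⟩
    · exact hσU _ _ (Finset.mem_image_of_mem _ ht)
    · simpa using hσ.2 _ _ (v : WithZero S) (hσU _ _ (Finset.mem_image_of_mem _ hu))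
  exact hσ.1.trans (hσ.1.symm (hzero x)) (hzero y)

end WithZero

theorem stmt17 {S : Type*} [Semigroup S] :
    FRE (WithZero S) ↔
      (FRE S ∧ ∃ U : Finset S, RS1 (↑U : Set S) = Set.univ) := by
  have hzero : FGRightCong (rAnn (0 : WithZero S)) ↔
      ∃ U : Finset S, RS1 (↑U : Set S) = Set.univ := by
    rw [WithZero.rAnn_zero]
    exact ⟨WithZero.exists_RS1_eq_univ_of_fgRightCong_top,
      fun ⟨_, hU⟩ => WithZero.fgRightCong_top_of_RS1_eq_univ hU⟩
  simp only [FRE, WithZero.forall, hzero, WithZero.fgRightCong_rAnn_coe_iff, and_comm]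
end

section
/- Let {M_i : i ∈ I} be a family of monoids. The monoid free product (coproduct) of the family {M_i : i ∈ I} is finitely right equated if and only if each monoid M_i is finitely right equated. -/
/-!
Each `M i` is a retract of the free product, and a finite generating set of `r(f a)` pulls back
along a retraction `g` to one of `r(a)`; this gives the forward direction.

Conversely, induct on the reduced word `w g` of `a`, with last letter `g ∈ M i`. If `g g' = 1`
then `r(w g)` is generated by `(1, g' g)` together with the generators of `r(w)` translated
by `g'`. Otherwise no `g u` is `1`, so the reduced word of `a s` is `w (g u) r` where `s = u r` is
the decomposition of `s` at `M i`; thus `a s = a t` forces `s = u r`, `t = v r` with `g u = g v`,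
and the generators of `r(g)` in `M i` generate `r(a)`.
-/

section RightCongruence

variable {S T : Type*}

theorem rcGen_of [Semigroup S] {X : S → S → Prop} {x y : S} (h : X x y) : rcGen X x y :=
  fun _ _ hX => hX x y h

theorem rcGen_le [Semigroup S] {X ρ : S → S → Prop} (hρ : IsRightCong ρ)
    (hX : ∀ x y, X x y → ρ x y) {a b : S} (h : rcGen X a b) : ρ a b :=
  h ρ hρ hX

theorem isRightCong_rcGen [Semigroup S] (X : S → S → Prop) : IsRightCong (rcGen X) :=
  ⟨⟨fun a _ hρ _ => hρ.1.refl a, fun h ρ hρ hX => hρ.1.symm (h ρ hρ hX),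
    fun h₁ h₂ ρ hρ hX => hρ.1.trans (h₁ ρ hρ hX) (h₂ ρ hρ hX)⟩,
    fun a b s h ρ hρ hX => hρ.2 a b s (h ρ hρ hX)⟩

theorem isRightCong_rAnn [Semigroup S] (a : S) : IsRightCong (rAnn a) :=
  ⟨⟨fun _ => rfl, Eq.symm, Eq.trans⟩,
    fun x y s (h : a * x = a * y) => show a * (x * s) = a * (y * s) by
      rw [← mul_assoc, ← mul_assoc, h]⟩

theorem IsRightCong.comap [Semigroup S] [Semigroup T] {ρ : T → T → Prop} (hρ : IsRightCong ρ)
    {φ ψ : S → T} (hφ : ∀ x s, φ (x * s) = φ x * ψ s) :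
    IsRightCong fun a b => ρ (φ a) (φ b) :=
  ⟨⟨fun _ => hρ.1.refl _, hρ.1.symm, hρ.1.trans⟩,
    fun a b s h => by simpa only [hφ] using hρ.2 _ _ (ψ s) h⟩

/-- Covers both monoid homomorphisms (`ψ = φ`) and left translations `x ↦ c * x` (`ψ = id`). -/
theorem rcGen_map [Semigroup S] [Semigroup T] {φ ψ : S → T}
    (hφ : ∀ x s, φ (x * s) = φ x * ψ s) {X : S → S → Prop} {Y : T → T → Prop}
    (hXY : ∀ x y, X x y → Y (φ x) (φ y)) {a b : S} (h : rcGen X a b) :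
    rcGen Y (φ a) (φ b) :=
  rcGen_le ((isRightCong_rcGen Y).comap hφ) (fun x y hxy => rcGen_of (hXY x y hxy)) h

theorem rAnn_of_mem [Semigroup S] {a : S} {Y : Finset (S × S)}
    (hY : rAnn a = rcGen fun x y => (x, y) ∈ Y) {p q : S} (h : (p, q) ∈ Y) : a * p = a * q :=
  show rAnn a p q from hY ▸ rcGen_of h

variable [Monoid S] [Monoid T]

theorem fgRightCong_rAnn_one : FGRightCong (rAnn (1 : S)) := by
  refine ⟨∅, funext₂ fun s t => propext ⟨fun h => ?_, fun h => ?_⟩⟩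
  · obtain rfl : s = t := by simpa [rAnn] using h
    exact (isRightCong_rcGen _).1.refl s
  · exact rcGen_le (isRightCong_rAnn 1) (by simp) h

/-- Right multiplication by `c` is undone by `c'`, so `s` and `c' * (c * s)` are identified by the
extra generator `(1, c' * c)`. -/
theorem fgRightCong_rAnn_mul_of_mul_eq_one {b c c' : S} (hc : c * c' = 1)
    (hb : FGRightCong (rAnn b)) : FGRightCong (rAnn (b * c)) := by
  classical
  obtain ⟨X, hX⟩ := hb
  set Y := insert ((1 : S), c' * c) (X.image fun p => (c' * p.1, c' * p.2))
  have hYcong := isRightCong_rcGen fun x y => (x, y) ∈ Y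
  refine ⟨Y, funext₂ fun s t => propext ⟨fun h => ?_, fun h => ?_⟩⟩
  · have hcs : rAnn b (c * s) (c * t) := by simpa only [rAnn, mul_assoc] using h
    rw [hX] at hcs
    have hcancel (u : S) : rcGen (fun x y => (x, y) ∈ Y) u (c' * (c * u)) := by
      simpa only [one_mul, mul_assoc] using
        hYcong.2 _ _ u (rcGen_of (Finset.mem_insert_self _ _))
    refine hYcong.1.trans (hcancel s) (hYcong.1.trans ?_ (hYcong.1.symm (hcancel t)))
    exact rcGen_map (fun x s => (mul_assoc c' x s).symm) (ψ := id)
      (fun x y hxy => Finset.mem_insert_of_mem (Finset.mem_image_of_mem _ hxy)) hcs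
  · have hbc : b * c * c' = b := by rw [mul_assoc, hc, mul_one]
    refine rcGen_le (isRightCong_rAnn (b * c)) (fun x y hxy => ?_) h
    rcases Finset.mem_insert.1 hxy with hxy | hxy
    · obtain ⟨rfl, rfl⟩ := Prod.mk.inj hxy
      show b * c * 1 = b * c * (c' * c)
      rw [← mul_assoc, hbc, mul_one]
    · obtain ⟨⟨p, q⟩, hpq, hxy⟩ := Finset.mem_image.1 hxy
      obtain ⟨rfl, rfl⟩ := Prod.mk.inj hxy
      show b * c * (c' * p) = b * c * (c' * q)
      rw [← mul_assoc, ← mul_assoc, hbc]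
      exact rAnn_of_mem hX hpq

theorem fgRightCong_rAnn_of_factor (f : T →* S) {a : S} {g : T} (hg : FGRightCong (rAnn g))
    (hfa : ∀ p q, g * p = g * q → a * f p = a * f q)
    (hfactor : ∀ s t, a * s = a * t → ∃ u v r, s = f u * r ∧ t = f v * r ∧ g * u = g * v) :
    FGRightCong (rAnn a) := by
  classical
  obtain ⟨Y, hY⟩ := hg
  refine ⟨Y.image (Prod.map f f), funext₂ fun s t => propext ⟨fun h => ?_, fun h => ?_⟩⟩
  · obtain ⟨u, v, r, rfl, rfl, huv⟩ := hfactor s t h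
    have huv : rAnn g u v := huv
    rw [hY] at huv
    exact (isRightCong_rcGen _).2 _ _ r <| rcGen_map (map_mul f)
      (fun x y hxy => Finset.mem_image_of_mem (Prod.map f f) hxy) huv
  · refine rcGen_le (isRightCong_rAnn a) (fun x y hxy => ?_) h
    obtain ⟨⟨p, q⟩, hpq, hxy⟩ := Finset.mem_image.1 hxy
    obtain ⟨rfl, rfl⟩ := Prod.mk.inj hxy
    exact hfa p q (rAnn_of_mem hY hpq)

theorem FRE.of_leftInverse (f : S →* T) (g : T →* S) (hgf : Function.LeftInverse g f)
    (h : FRE T) : FRE S := fun a =>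
  fgRightCong_rAnn_of_factor g (h (f a))
    (fun p q hpq => by simpa only [map_mul, hgf a] using congrArg g hpq)
    (fun s t hst => ⟨f s, f t, 1, by rw [hgf, mul_one], by rw [hgf, mul_one], by
      rw [← map_mul, ← map_mul, hst]⟩)

end RightCongruence

namespace Monoid.CoprodI.Word

variable {ι : Type*} {M : ι → Type*} [∀ i, Monoid (M i)]

theorem exists_prod_eq_prod_mul_of {w : Word M} {L : List (Σ i, M i)} {i : ι} {g : M i}
    (h : w.toList = L ++ [⟨i, g⟩]) :
    ∃ w' : Word M, w'.toList = L ∧ (∀ l ∈ L.getLast?, l.1 ≠ i) ∧ g ≠ 1 ∧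
      w.prod = w'.prod * of g := by
  have hchain := w.chain_ne
  rw [h] at hchain
  refine ⟨⟨L, fun l hl => w.ne_one l (by simp [h, hl]), hchain.left_of_append⟩, rfl,
    fun l hl => (List.isChain_append.1 hchain).2.2 l hl _ rfl,
    w.ne_one ⟨i, g⟩ (by simp [h]), ?_⟩
  simp [prod, h]

variable [DecidableEq ι] [∀ i, DecidableEq (M i)]

theorem toList_equiv_prod_mul_of_mul_prod {i : ι} {x : M i} (hx : x ≠ 1) {w t : Word M}
    (hw : ∀ l ∈ w.toList.getLast?, l.1 ≠ i) (ht : t.fstIdx ≠ some i) :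
    (equiv (w.prod * of x * t.prod)).toList = w.toList ++ ⟨i, x⟩ :: t.toList := by
  let W : Word M :=
    { toList := w.toList ++ ⟨i, x⟩ :: t.toList
      ne_one := by
        simp only [List.mem_append, List.mem_cons]
        rintro l (hl | rfl | hl)
        exacts [w.ne_one l hl, hx, t.ne_one l hl]
      chain_ne := w.chain_ne.append (t.chain_ne.cons (fstIdx_ne_iff.mp ht))
        (by simpa using hw) }
  have hW : W.prod = w.prod * of x * t.prod := by simp [W, prod, mul_assoc]
  rw [← hW]
  exact congrArg toList (equiv.apply_symm_apply W)

theorem of_head_mul_prod_tail (i : ι) (s : CoprodI M) :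
    of (equivPair i (equiv s)).head * (equivPair i (equiv s)).tail.prod = s := by
  rw [← prod_rcons, ← equivPair_symm, Equiv.symm_apply_apply]
  exact equiv.symm_apply_apply s

/-- Since `g` has no right inverse, the letter `g * u` never collapses to `1`, so the reduced word
of `w * g * s` is read off directly and the equation can be cancelled letter by letter. -/
theorem head_eq_and_tail_eq_of_prod_mul_of_mul_eq {i : ι} {g : M i} (hg : ∀ u, g * u ≠ 1)
    {w : Word M} (hw : ∀ l ∈ w.toList.getLast?, l.1 ≠ i) {s t : CoprodI M}
    (h : w.prod * of g * s = w.prod * of g * t) :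
    g * (equivPair i (equiv s)).head = g * (equivPair i (equiv t)).head ∧
      (equivPair i (equiv s)).tail = (equivPair i (equiv t)).tail := by
  have hform (s : CoprodI M) : (equiv (w.prod * of g * s)).toList =
      w.toList ++ ⟨i, g * (equivPair i (equiv s)).head⟩ :: (equivPair i (equiv s)).tail.toList := by
    conv_lhs => rw [← of_head_mul_prod_tail i s, ← mul_assoc, mul_assoc _ (of g), ← map_mul]
    exact toList_equiv_prod_mul_of_mul_prod (hg _) hw (equivPair i (equiv s)).fstIdx_ne
  have hlists := congrArg (fun a => (equiv a).toList) h
  simp only [hform, List.append_cancel_left_eq, List.cons.injEq, Sigma.mk.injEq, heq_eq_eq,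
    true_and] at hlists
  exact ⟨hlists.1, Word.ext hlists.2⟩

theorem fgRightCong_rAnn_prod (hM : ∀ i, FRE (M i)) (w : Word M) :
    FGRightCong (rAnn w.prod) := by
  induction h : w.toList using List.reverseRecOn generalizing w with
  | nil => rw [show w = empty from Word.ext h, prod_empty]; exact fgRightCong_rAnn_one
  | append_singleton L letter ih =>
    obtain ⟨i, g⟩ := letter
    obtain ⟨w', rfl, hlast, -, hw⟩ := exists_prod_eq_prod_mul_of h
    rw [hw]
    by_cases hinv : ∃ u, g * u = 1
    · obtain ⟨u, hu⟩ := hinv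
      exact fgRightCong_rAnn_mul_of_mul_eq_one (c' := of u) (by rw [← map_mul, hu, map_one])
        (ih w' rfl)
    · push Not at hinv
      refine fgRightCong_rAnn_of_factor of (hM i g)
        (fun p q hpq => by rw [mul_assoc, mul_assoc, ← map_mul, ← map_mul, hpq])
        (fun s t hst => ?_)
      obtain ⟨hhead, htail⟩ := head_eq_and_tail_eq_of_prod_mul_of_mul_eq hinv hlast hst
      exact ⟨_, _, _, (of_head_mul_prod_tail i s).symm,
        htail ▸ (of_head_mul_prod_tail i t).symm, hhead⟩

end Monoid.CoprodI.Word

theorem Monoid.CoprodI.fre {ι : Type*} {M : ι → Type*} [∀ i, Monoid (M i)]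
    (hM : ∀ i, FRE (M i)) : FRE (CoprodI M) := by
  classical
  intro a
  have := Word.fgRightCong_rAnn_prod hM (Word.equiv a)
  rwa [show (Word.equiv a).prod = a from Word.equiv.symm_apply_apply a] at this

theorem stmt19 {ι : Type*} (M : ι → Type*) [∀ i, Monoid (M i)] :
    FRE (Monoid.CoprodI M) ↔ ∀ i, FRE (M i) := by
  classical
  exact ⟨fun h i => FRE.of_leftInverse _ _ (Monoid.CoprodI.of_leftInverse i) h,
    Monoid.CoprodI.fre⟩
end
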